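/- arXiv:2305.01472 — 5 statements merged into one kernel-verified Lean document; each statement's English description precedes it below -/
import Mathlib

section
/- Let d and t be positive integers. Let Γ be an abelian group and let A ⊆ Γ be a non-empty set such that there is an element x ∈ Γ for which d is the unique integer greater than 2 with dx ∈ A. Then there is a Γ-labelled graph (G, γ) such that arb_{(Γ,A)}(G, γ) ≥ t and G has no cycle of length at least d + 1 and γ-value in A. -/
namespace ArbPaper

universe u v

/-- The `γ`-value of a walk: the sum of the labels of its edges. -/
def walkVal {V : Type u} {Γ : Type v} [AddCommGroup Γ] {G : SimpleGraph V}
    (γ : Sym2 V → Γ) {x y : V} (w : G.Walk x y) : Γ :=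
  (w.edges.map γ).sum

/-- The set `S` induces a subgraph having no cycle of `γ`-value in `A`. -/
def NoCycleValIn {V : Type u} {Γ : Type v} [AddCommGroup Γ] (G : SimpleGraph V)
    (γ : Sym2 V → Γ) (A : Set Γ) (S : Set V) : Prop :=
  ∀ (v : V) (w : G.Walk v v), w.IsCycle → (∀ x ∈ w.support, x ∈ S) →
    walkVal γ w ∉ A

/-- The `(Γ, A)`-vertex-arboricity of the subgraph of `G` induced on `S`:
the minimum number of parts in a partition of `S` such that each part induces
a subgraph having no cycle of `γ`-value in `A`. -/
noncomputable def arbOn {V : Type u} {Γ : Type v} [AddCommGroup Γ] (G : SimpleGraph V)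
    (γ : Sym2 V → Γ) (A : Set Γ) (S : Set V) : ℕ :=
  sInf {k : ℕ | ∃ f : V → Fin k,
    ∀ i : Fin k, NoCycleValIn G γ A {v | v ∈ S ∧ f v = i}}

/-- The `(Γ, A)`-vertex-arboricity of `(G, γ)`. -/
noncomputable def arb {V : Type u} {Γ : Type v} [AddCommGroup Γ] (G : SimpleGraph V)
    (γ : Sym2 V → Γ) (A : Set Γ) : ℕ :=
  arbOn G γ A Set.univ

/-- `G` contains an `(A, d)`-cycle: a cycle of `γ`-value in `A` and length at least `d`. -/
def ContainsADCycle {V : Type u} {Γ : Type v} [AddCommGroup Γ] (G : SimpleGraph V)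
    (γ : Sym2 V → Γ) (A : Set Γ) (d : ℕ) : Prop :=
  ∃ (v : V) (w : G.Walk v v), w.IsCycle ∧ walkVal γ w ∈ A ∧ d ≤ w.length

/-- `b` (the branching vertices) together with the branching paths `P i j` (for `i < j`)
form a subdivision of the complete graph `K t` inside `G`. -/
def IsKtSubdivision {V : Type u} (G : SimpleGraph V) (t : ℕ) (b : Fin t → V)
    (P : ∀ i j : Fin t, G.Walk (b i) (b j)) : Prop :=
  Function.Injective b ∧
  (∀ i j : Fin t, i < j → (P i j).IsPath) ∧
  (∀ i j : Fin t, i < j → ∀ v ∈ (P i j).support, v ∈ Set.range b → v = b i ∨ v = b j) ∧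
  (∀ i j k l : Fin t, i < j → k < l → (i, j) ≠ (k, l) → ∀ v,
    v ∈ (P i j).support → v ∈ (P k l).support →
      (v = b i ∨ v = b j) ∧ (v = b k ∨ v = b l))

/-- `G` itself is (as a whole) a subdivision of `K t` with data `b`, `P`:
every vertex and every edge of `G` lies on some branching path. -/
def IsSpanningKtSubdivision {V : Type u} (G : SimpleGraph V) (t : ℕ) (b : Fin t → V)
    (P : ∀ i j : Fin t, G.Walk (b i) (b j)) : Prop :=
  IsKtSubdivision G t b P ∧
  (∀ v : V, ∃ i j : Fin t, i < j ∧ v ∈ (P i j).support) ∧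
  (∀ e ∈ G.edgeSet, ∃ i j : Fin t, i < j ∧ e ∈ (P i j).edges)

/-- `G` contains an `(A, d)`-subdivision of `K t`: a subdivision of `K t` in which every
branching path has `γ`-value in `A` and length at least `d`. -/
def ContainsADSubdivision {V : Type u} {Γ : Type v} [AddCommGroup Γ] (G : SimpleGraph V)
    (γ : Sym2 V → Γ) (A : Set Γ) (t d : ℕ) : Prop :=
  ∃ (b : Fin t → V) (P : ∀ i j : Fin t, G.Walk (b i) (b j)),
    IsKtSubdivision G t b P ∧
    ∀ i j : Fin t, i < j → walkVal γ (P i j) ∈ A ∧ d ≤ (P i j).length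

/-- `w` is an `X`-path lying inside the induced subgraph `G[Y]`: a path of length at
least `2` whose endpoints lie in `X`, internal vertices lie outside `X`, and all of
whose vertices lie in `Y`. -/
def IsXPathIn {V : Type u} (G : SimpleGraph V) (X Y : Set V) {x y : V}
    (w : G.Walk x y) : Prop :=
  w.IsPath ∧ 2 ≤ w.length ∧ x ∈ X ∧ y ∈ X ∧
  (∀ v ∈ w.support, v ∈ Y) ∧
  (∀ v ∈ w.support, v ≠ x → v ≠ y → v ∉ X)

/-- `(L 0, L 1, …, L p)` is a leveling of the connected graph `G`. -/
def IsLeveling {V : Type u} (G : SimpleGraph V) (p : ℕ) (L : ℕ → Set V) : Prop :=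
  (∀ i j, i ≤ p → j ≤ p → i ≠ j → Disjoint (L i) (L j)) ∧
  (∃ v : V, L 0 = {v}) ∧
  (∀ v : V, ∃ i, i ≤ p ∧ v ∈ L i) ∧
  (∀ i, 1 ≤ i → i ≤ p → ∀ v ∈ L i,
    (∃ u ∈ L (i - 1), G.Adj v u) ∧ (∀ j, j + 2 ≤ i → ∀ u ∈ L j, ¬ G.Adj v u))

/-- `G[Y]` is a connected component of `G[S]`. -/
def IsCompOf {V : Type u} (G : SimpleGraph V) (Y S : Set V) : Prop :=
  Y ⊆ S ∧ (G.induce Y).Connected ∧ ∀ u ∈ Y, ∀ v ∈ S, G.Adj u v → v ∈ Y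


lemma walkVal_const {V : Type u} {Γ : Type v} [AddCommGroup Γ] {G : SimpleGraph V}
    (x : Γ) {a b : V} (w : G.Walk a b) : walkVal (fun _ => x) w = w.length • x := by
  simp [walkVal, List.map_const', List.sum_replicate, SimpleGraph.Walk.length_edges]

open SimpleGraph

lemma pathOfFn {V : Type u} : ∀ (m : ℕ) (g : Fin (m+1) → V), Function.Injective g →
    ∃ p : (⊤ : SimpleGraph V).Walk (g 0) (g (Fin.last m)),
      p.IsPath ∧ p.length = m ∧ p.support = List.ofFn g ∧
      ∀ e ∈ p.edges, ∃ i : Fin m, e = s(g i.castSucc, g i.succ) := by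
  intro m
  induction m with
  | zero =>
    intro g _
    exact ⟨Walk.nil, by simp, by simp, by simp [List.ofFn_succ], by simp⟩
  | succ m ih =>
    intro g hg
    obtain ⟨p, hp, hl, hs, he⟩ := ih (g ∘ Fin.succ) (hg.comp (Fin.succ_injective _))
    have hadj : (⊤ : SimpleGraph V).Adj (g 0) (g (Fin.succ 0)) := by
      simp only [top_adj]
      intro h
      exact Fin.succ_ne_zero 0 (hg h).symm
    have hlast : (g ∘ Fin.succ) (Fin.last m) = g (Fin.last (m+1)) := by
      simp [Fin.succ_last]
    let q : (⊤ : SimpleGraph V).Walk (g (Fin.succ 0)) (g (Fin.last (m+1))) :=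
      p.copy rfl hlast
    have hq : q = p.copy rfl hlast := rfl
    refine ⟨Walk.cons hadj q, ?_, by simp only [hq, Walk.length_cons, Walk.length_copy, hl], ?_, ?_⟩
    · rw [Walk.cons_isPath_iff]
      refine ⟨(Walk.isPath_copy p rfl hlast).mpr hp, ?_⟩
      rw [hq, Walk.support_copy, hs, List.mem_ofFn]
      rintro ⟨i, hi⟩
      exact Fin.succ_ne_zero i (hg hi)
    · rw [Walk.support_cons, hq, Walk.support_copy, hs]
      simp [List.ofFn_succ, Function.comp]
    · intro e hee
      rw [Walk.edges_cons, hq, Walk.edges_copy, List.mem_cons] at hee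
      rcases hee with h | h
      · exact ⟨0, by simpa using h⟩
      · obtain ⟨i, hi⟩ := he e h
        refine ⟨i.succ, ?_⟩
        rw [hi]
        simp only [Function.comp_apply, Fin.succ_castSucc]

lemma exists_cycle {V : Type u} (dd : ℕ) (hdd : 3 ≤ dd) (g : Fin dd → V)
    (hg : Function.Injective g) :
    ∃ (v : V) (w : (⊤ : SimpleGraph V).Walk v v), w.IsCycle ∧ w.length = dd ∧
      ∀ u ∈ w.support, u ∈ Set.range g := by
  obtain ⟨m, rfl⟩ : ∃ m, dd = m + 1 := ⟨dd - 1, by omega⟩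
  have hm : 2 ≤ m := by omega
  obtain ⟨p, hp, hl, hs, he⟩ := pathOfFn m g hg
  have hadj : (⊤ : SimpleGraph V).Adj (g 0) (g (Fin.last m)) := by
    simp only [top_adj]
    intro h
    have := hg h
    simp only [Fin.ext_iff, Fin.val_zero, Fin.val_last] at this
    omega
  refine ⟨g 0, Walk.cons hadj p.reverse, ?_, by simp [hl], ?_⟩
  · rw [Walk.cons_isCycle_iff]
    refine ⟨hp.reverse, ?_⟩
    rw [Walk.edges_reverse, List.mem_reverse]
    intro hmem
    obtain ⟨i, hi⟩ := he _ hmem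
    rw [Sym2.eq_iff] at hi
    rcases hi with ⟨h1, h2⟩ | ⟨h1, h2⟩
    · have e1 := hg h1; have e2 := hg h2
      simp only [Fin.ext_iff, Fin.val_zero, Fin.val_last, Fin.coe_castSucc, Fin.val_succ] at e1 e2
      omega
    · have e1 := hg h2
      simp only [Fin.ext_iff, Fin.val_zero, Fin.val_last, Fin.coe_castSucc, Fin.val_succ] at e1
      omega
  · intro u hu
    rw [Walk.support_cons, List.mem_cons, Walk.support_reverse, List.mem_reverse, hs,
      List.mem_ofFn] at hu
    rcases hu with h | h
    · exact ⟨0, h.symm⟩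
    · exact h


theorem statement3 (d t : ℕ) (hd : 0 < d) (ht : 0 < t)
    (Γ : Type v) [AddCommGroup Γ] (A : Set Γ) (hA : A.Nonempty)
    (x : Γ) (hdx : 2 < d) (hxA : d • x ∈ A)
    (huniq : ∀ e : ℕ, 2 < e → e • x ∈ A → e = d) :
    ∃ (n : ℕ) (G : SimpleGraph (Fin n)) (γ : Sym2 (Fin n) → Γ),
      t ≤ arb G γ A ∧
      ∀ (v : Fin n) (w : G.Walk v v), w.IsCycle → d + 1 ≤ w.length →
        walkVal γ w ∉ A := by
  set n := (t - 1) * (d - 1) + 1 with hn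
  refine ⟨n, ⊤, fun _ => x, ?_, ?_⟩
  · -- t ≤ arb
    rw [arb, arbOn]
    apply le_csInf
    · -- the set is nonempty: use the identity coloring
      refine ⟨n, fun v => v, fun i v w hw hsupp => ?_⟩
      exfalso
      cases w with
      | nil => exact hw.ne_nil rfl
      | @cons _ u _ h q =>
        have h1 := (hsupp v (by simp)).2
        have h2 := (hsupp u (by simp [Walk.support_cons, q.start_mem_support])).2
        exact h.ne (h1.trans h2.symm)
    · rintro k ⟨f, hf⟩
      by_contra hk
      push_neg at hk
      -- pigeonhole: some fiber has ≥ d elements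
      rcases Nat.eq_zero_or_pos k with rfl | hkpos
      · exact (f ⟨0, by omega⟩).elim0
      have hsum : (Finset.univ : Finset (Fin n)).card =
          ∑ i : Fin k, (Finset.univ.filter fun v => f v = i).card :=
        Finset.card_eq_sum_card_fiberwise (fun v _ => Finset.mem_univ (f v))
      have hbig : ∃ i : Fin k, d ≤ (Finset.univ.filter fun v => f v = i).card := by
        by_contra hc
        push_neg at hc
        have : ∑ i : Fin k, (Finset.univ.filter fun v => f v = i).card ≤ k * (d - 1) := by
          calc ∑ i : Fin k, (Finset.univ.filter fun v => f v = i).card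
              ≤ ∑ _i : Fin k, (d - 1) := Finset.sum_le_sum fun i _ => by
                have := hc i; omega
            _ = k * (d - 1) := by simp [mul_comm]
        rw [Finset.card_univ, Fintype.card_fin] at hsum
        have hkle : k * (d - 1) ≤ (t - 1) * (d - 1) :=
          Nat.mul_le_mul_right _ (by omega)
        omega
      obtain ⟨i, hi⟩ := hbig
      obtain ⟨s, hss, hscard⟩ := Finset.exists_subset_card_eq hi
      set g : Fin d → Fin n := fun j => (s.orderIsoOfFin hscard j : Fin n) with hg
      have hginj : Function.Injective g :=
        Subtype.val_injective.comp (s.orderIsoOfFin hscard).injective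
      have hgmem : ∀ j, f (g j) = i := fun j => by
        have := hss (s.orderIsoOfFin hscard j).2
        simpa [hg] using this
      obtain ⟨v, w, hcyc, hlen, hsupp⟩ := exists_cycle d (by omega) g hginj
      refine hf i v w hcyc ?_ ?_
      · intro u hu
        obtain ⟨j, hj⟩ := hsupp u hu
        exact ⟨trivial, hj ▸ hgmem j⟩
      · rw [walkVal_const, hlen]
        exact hxA
  · -- no long cycle with value in A
    intro v w hw hlen hmem
    rw [walkVal_const] at hmem
    have := huniq w.length (by omega) hmem
    omega

end ArbPaper
end

section
/- Let t be a positive integer, let Γ be an abelian group, and let A ⊆ Γ be a non-empty set. Let (G, γ) be a Γ-labelled graph. If arb_{(Γ,A)}(G, γ) ≥ 2t, then G contains t pairwise vertex-disjoint cycles whose γ-values are all in A. -/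
namespace ArbPaper

universe u v

section Aux

variable {V : Type u} {Γ : Type v} [AddCommGroup Γ] {G : SimpleGraph V}
  {γ : Sym2 V → Γ} {A : Set Γ}

lemma start_mem_tail_support {v : V} (w : G.Walk v v) (hne : w.length ≠ 0) :
    v ∈ w.support.tail := by
  cases w with
  | nil => simp at hne
  | cons h p =>
    simp only [SimpleGraph.Walk.support_cons, List.tail_cons]
    exact p.end_mem_support

lemma tail_length_eq {v : V} (w : G.Walk v v) : w.support.tail.length = w.length := by
  have := w.length_support
  have h2 : w.support.tail.length = w.support.length - 1 := List.length_tail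
  omega

lemma cycle_length_le_card {v : V} {w : G.Walk v v} (hw : w.IsCycle) {D : Finset V}
    (h : ∀ x ∈ w.support, x ∈ D) : w.length ≤ D.card := by
  classical
  have hnd : w.support.tail.Nodup := hw.support_nodup
  have h1 : w.support.tail.toFinset.card = w.support.tail.length :=
    List.toFinset_card_of_nodup hnd
  have hsub : w.support.tail.toFinset ⊆ D := by
    intro x hx
    exact h x (List.mem_of_mem_tail (List.mem_toFinset.1 hx))
  have := Finset.card_le_card hsub
  rw [h1, tail_length_eq] at this
  exact this

lemma cycle_card_support {v : V} {w : G.Walk v v} (hw : w.IsCycle) [DecidableEq V] :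
    w.support.toFinset.card = w.length := by
  have h3 := hw.three_le_length
  have h1 : w.support = v :: w.support.tail := w.support_eq_cons
  have h2 : v ∈ w.support.tail := start_mem_tail_support w (by omega)
  have : w.support.toFinset = w.support.tail.toFinset := by
    conv_lhs => rw [h1]
    rw [List.toFinset_cons, Finset.insert_eq_self]
    exact List.mem_toFinset.2 h2
  rw [this, List.toFinset_card_of_nodup hw.support_nodup, tail_length_eq]

lemma noCycleValIn_of_subsingleton {x : V} {S : Set V} (hS : S ⊆ {x}) :
    NoCycleValIn G γ A S := by
  classical
  intro v w hw hsup
  exfalso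
  have h3 := hw.three_le_length
  have := cycle_length_le_card hw (D := {x}) (fun y hy => by
    simpa using hS (hsup y hy))
  simp at this
  omega

lemma noCycleValIn_mono {S T : Set V} (hST : S ⊆ T) (h : NoCycleValIn G γ A T) :
    NoCycleValIn G γ A S :=
  fun v w hw hsup => h v w hw (fun x hx => hST (hsup x hx))

lemma arbSet_nonempty [Fintype V] (S : Set V) :
    ∃ k, ∃ f : V → Fin k, ∀ i : Fin k, NoCycleValIn G γ A {v | v ∈ S ∧ f v = i} := by
  classical
  refine ⟨Fintype.card V, Fintype.equivFin V, fun i => ?_⟩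
  exact noCycleValIn_of_subsingleton (x := (Fintype.equivFin V).symm i)
    (fun v hv => by
      simp only [Set.mem_setOf_eq] at hv
      simp [← hv.2])

lemma key [Fintype V] (t : ℕ) :
    ∀ S : Set V, 2 * t ≤ arbOn G γ A S →
    ∃ (c : Fin t → V) (w : ∀ i : Fin t, G.Walk (c i) (c i)),
      (∀ i, (w i).IsCycle ∧ walkVal γ (w i) ∈ A ∧ ∀ x ∈ (w i).support, x ∈ S) ∧
      ∀ i j, i ≠ j → ∀ x, x ∈ (w i).support → x ∉ (w j).support := by
  classical
  induction t with
  | zero =>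
    intro S _
    exact ⟨fun i => i.elim0, fun i => i.elim0, fun i => i.elim0, fun i => i.elim0⟩
  | succ t ih =>
    intro S hS
    -- Step A: there is an A-cycle with support in S
    have hex : ∃ (v : V) (w : G.Walk v v),
        w.IsCycle ∧ walkVal γ w ∈ A ∧ ∀ x ∈ w.support, x ∈ S := by
      by_contra h
      push_neg at h
      have h1 : (1 : ℕ) ∈ {k : ℕ | ∃ f : V → Fin k,
          ∀ i : Fin k, NoCycleValIn G γ A {v | v ∈ S ∧ f v = i}} := by
        refine ⟨fun _ => 0, fun i v w hw hsup hval => ?_⟩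
        obtain ⟨x, hx1, hx2⟩ := h v w hw hval
        exact hx2 (hsup x hx1).1
      have h2 : arbOn G γ A S ≤ 1 := Nat.sInf_le h1
      omega
    -- Step B: minimal-length A-cycle in S
    set LS : Set ℕ := {n | ∃ (v : V) (w : G.Walk v v),
      w.IsCycle ∧ walkVal γ w ∈ A ∧ (∀ x ∈ w.support, x ∈ S) ∧ w.length = n} with hLS
    have hLSne : LS.Nonempty := by
      obtain ⟨v, w, h1, h2, h3⟩ := hex
      exact ⟨w.length, v, w, h1, h2, h3, rfl⟩
    obtain ⟨v0, C, hC, hCA, hCS, hClen⟩ := Nat.sInf_mem hLSne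
    have hCmin : ∀ n ∈ LS, C.length ≤ n := by
      intro n hn; rw [hClen]; exact Nat.sInf_le hn
    set S' : Set V := S \ {x | x ∈ C.support} with hS'def
    -- Step C: arbOn on S' is at least 2t
    have hS' : 2 * t ≤ arbOn G γ A S' := by
      by_contra h'
      push_neg at h'
      have hmem : arbOn G γ A S' ∈ {k : ℕ | ∃ f : V → Fin k,
          ∀ i : Fin k, NoCycleValIn G γ A {v | v ∈ S' ∧ f v = i}} := by
        apply Nat.sInf_mem
        obtain ⟨k, f, hf⟩ := arbSet_nonempty (G := G) (γ := γ) (A := A) S'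
        exact ⟨k, f, hf⟩
      set k := arbOn G γ A S' with hk
      obtain ⟨f', hf'⟩ := hmem
      -- build a partition of S into k+2 parts
      set g : V → Fin (k + 2) := fun v =>
        if v ∈ C.support then
          (if v = v0 then (⟨k, by omega⟩ : Fin (k + 2)) else ⟨k + 1, by omega⟩)
        else ⟨(f' v).val, by omega⟩ with hg
      have hgood : (k + 2) ∈ {m : ℕ | ∃ f : V → Fin m,
          ∀ i : Fin m, NoCycleValIn G γ A {v | v ∈ S ∧ f v = i}} := by
        refine ⟨g, fun i v w hw hsup hval => ?_⟩
        rcases lt_trichotomy i.val k with hik | hik | hik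
        · -- part comes from f'
          refine hf' ⟨i.val, hik⟩ v w hw (fun x hx => ?_) hval
          obtain ⟨hxS, hxg⟩ := hsup x hx
          by_cases hxC : x ∈ C.support
          · exfalso
            by_cases hxv : x = v0 <;>
              simp only [hg, hxC, hxv, if_true, if_false, ite_true, ite_false] at hxg <;>
              · have := congrArg Fin.val hxg; simp at this; omega
          · have hxg' : (⟨(f' x).val, by omega⟩ : Fin (k+2)) = i := by
              simpa [hg, hxC] using hxg
            have hval' : (f' x).val = i.val := congrArg Fin.val hxg'
            refine ⟨⟨hxS, hxC⟩, ?_⟩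
            exact Fin.ext hval'
        · -- part k : subset of {v0}
          exfalso
          have h3 := hw.three_le_length
          have hcard := cycle_length_le_card hw (D := {v0}) (fun x hx => by
            obtain ⟨hxS, hxg⟩ := hsup x hx
            by_cases hxC : x ∈ C.support
            · by_cases hxv : x = v0
              · simp [hxv]
              · exfalso
                simp only [hg, hxC, hxv, if_true, ite_false] at hxg
                have := congrArg Fin.val hxg; simp at this; omega
            · exfalso
              simp only [hg, hxC, if_false, ite_false] at hxg
              have := congrArg Fin.val hxg
              simp only [← hik] at this
              have h4 : (f' x).val < k := (f' x).isLt
              omega)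
          simp at hcard
          omega
        · -- part k+1 : subset of C.support \ {v0}, contradicts minimality
          have hik' : i.val = k + 1 := by omega
          have hsub : ∀ x ∈ w.support, x ∈ C.support.toFinset.erase v0 := by
            intro x hx
            obtain ⟨hxS, hxg⟩ := hsup x hx
            by_cases hxC : x ∈ C.support
            · by_cases hxv : x = v0
              · exfalso
                simp only [hg, hxC, hxv, if_true, ite_true] at hxg
                have := congrArg Fin.val hxg; simp at this; omega
              · exact Finset.mem_erase.2 ⟨hxv, List.mem_toFinset.2 hxC⟩
            · exfalso
              simp only [hg, hxC, if_false, ite_false] at hxg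
              have := congrArg Fin.val hxg
              have h4 : (f' x).val < k := (f' x).isLt
              simp only at this
              omega
          have hwlen : w.length ≤ (C.support.toFinset.erase v0).card :=
            cycle_length_le_card hw hsub
          have hv0 : v0 ∈ C.support.toFinset := List.mem_toFinset.2 C.start_mem_support
          have hcard : (C.support.toFinset.erase v0).card = C.support.toFinset.card - 1 :=
            Finset.card_erase_of_mem hv0
          have hCcard : C.support.toFinset.card = C.length := cycle_card_support hC
          have hwS : ∀ x ∈ w.support, x ∈ S := fun x hx => (hsup x hx).1
          have hwLS : w.length ∈ LS := ⟨v, w, hw, hval, hwS, rfl⟩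
          have := hCmin _ hwLS
          have h3 := hC.three_le_length
          omega
      have h2 : arbOn G γ A S ≤ k + 2 := Nat.sInf_le hgood
      omega
    -- Step D: apply induction hypothesis and add C
    obtain ⟨c, w, hw1, hw2⟩ := ih S' hS'
    set F : Fin (t + 1) → (Σ v : V, G.Walk v v) :=
      Fin.cons ⟨v0, C⟩ (fun i => ⟨c i, w i⟩) with hF
    refine ⟨fun i => (F i).1, fun i => (F i).2, ?_, ?_⟩
    · intro i
      induction i using Fin.cases with
      | zero => simpa [hF] using ⟨hC, hCA, hCS⟩
      | succ j =>
        have := hw1 j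
        simp only [hF, Fin.cons_succ]
        exact ⟨this.1, this.2.1, fun x hx => (this.2.2 x hx).1⟩
    · intro i j hij x hxi hxj
      induction i using Fin.cases with
      | zero =>
        induction j using Fin.cases with
        | zero => exact hij rfl
        | succ j' =>
          simp only [hF, Fin.cons_zero, Fin.cons_succ] at hxi hxj
          exact ((hw1 j').2.2 x hxj).2 hxi
      | succ i' =>
        induction j using Fin.cases with
        | zero =>
          simp only [hF, Fin.cons_zero, Fin.cons_succ] at hxi hxj
          exact ((hw1 i').2.2 x hxi).2 hxj
        | succ j' =>
          simp only [hF, Fin.cons_succ] at hxi hxj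
          have : i' ≠ j' := fun h => hij (by rw [h])
          exact hw2 i' j' this x hxi hxj

end Aux

theorem statement7 (t : ℕ) (ht : 0 < t)
    (Γ : Type v) [AddCommGroup Γ] (A : Set Γ) (hA : A.Nonempty)
    (V : Type u) [Fintype V] (G : SimpleGraph V) (γ : Sym2 V → Γ)
    (harb : 2 * t ≤ arb G γ A) :
    ∃ (c : Fin t → V) (w : ∀ i : Fin t, G.Walk (c i) (c i)),
      (∀ i, (w i).IsCycle ∧ walkVal γ (w i) ∈ A) ∧
      ∀ i j, i ≠ j → ∀ x, x ∈ (w i).support → x ∉ (w j).support := by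
  obtain ⟨c, w, h1, h2⟩ := key (G := G) (γ := γ) (A := A) t Set.univ harb
  exact ⟨c, w, fun i => ⟨(h1 i).1, (h1 i).2.1⟩, h2⟩

end ArbPaper
end

section
/- Let Γ be an abelian group and let A ⊆ Γ be a non-empty set. For every positive integer t, there is a Γ-labelled graph (G, γ) with arb_{(Γ,A)}(G, γ) ≥ t. -/
namespace ArbPaper

universe u v

theorem statement8 (Γ : Type v) [AddCommGroup Γ] (A : Set Γ) (hA : A.Nonempty)
    (t : ℕ) (ht : 0 < t) :
    ∃ (n : ℕ) (G : SimpleGraph (Fin n)) (γ : Sym2 (Fin n) → Γ),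
      t ≤ arb G γ A := by
  classical
  obtain ⟨a, ha⟩ := hA
  have hsymm : ∀ x y : Fin (t * t),
      (if x.val % t = y.val % t then a else 0) = (if y.val % t = x.val % t then a else 0) := by
    intro x y
    by_cases h : x.val % t = y.val % t
    · rw [if_pos h, if_pos (Eq.symm h)]
    · rw [if_neg h, if_neg (fun h' => h (Eq.symm h'))]
  set γ : Sym2 (Fin (t * t)) → Γ :=
    Sym2.lift ⟨fun x y => if x.val % t = y.val % t then a else 0, hsymm⟩ with hγ
  refine ⟨t * t, ⊤, γ, ?_⟩
  rw [arb, arbOn]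
  -- nonemptiness witness: the identity coloring
  have hne : {k : ℕ | ∃ f : Fin (t * t) → Fin k,
      ∀ i : Fin k, NoCycleValIn ⊤ γ A {v | v ∈ Set.univ ∧ f v = i}}.Nonempty := by
    refine ⟨t * t, fun v => v, ?_⟩
    intro i v w hw hsupp
    exfalso
    cases w with
    | nil => exact (SimpleGraph.Walk.isCycle_def _).1 hw |>.2.1 rfl
    | cons hadj q =>
      rename_i u
      have h1 : v = i := (hsupp v (SimpleGraph.Walk.start_mem_support _)).2
      have h2 : u = i := by
        refine (hsupp u ?_).2
        simp [SimpleGraph.Walk.support_cons]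
      exact hadj.ne (h1.trans h2.symm)
  refine le_csInf hne ?_
  rintro k ⟨f, hf⟩
  by_contra hk
  push_neg at hk
  -- pigeonhole: some color class has more than t vertices
  have hcard : Fintype.card (Fin k) * t < Fintype.card (Fin (t * t)) := by
    simpa using (Nat.mul_lt_mul_right ht).2 hk
  obtain ⟨i, hi⟩ := Fintype.exists_lt_card_fiber_of_mul_lt_card f hcard
  set S : Finset (Fin (t * t)) := Finset.univ.filter (fun x => f x = i) with hS
  have hmap : ∀ x ∈ S, (⟨x.val % t, Nat.mod_lt _ ht⟩ : Fin t) ∈ (Finset.univ : Finset (Fin t)) :=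
    fun x _ => Finset.mem_univ _
  have hcard2 : (Finset.univ : Finset (Fin t)).card < S.card := by
    simpa using hi
  obtain ⟨u, hu, v, hv, huv, hcc⟩ :=
    Finset.exists_ne_map_eq_of_card_lt_of_maps_to hcard2 hmap
  have hccv : u.val % t = v.val % t := by
    simpa [Fin.ext_iff] using hcc
  -- a vertex in S with a different residue class
  have hfiber : (Finset.univ.filter (fun x : Fin (t * t) => x.val % t = u.val % t)).card ≤ t := by
    have hinj := Finset.card_le_card_of_injOn
      (s := Finset.univ.filter (fun x : Fin (t * t) => x.val % t = u.val % t))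
      (t := (Finset.univ : Finset (Fin t)))
      (fun x : Fin (t * t) => (⟨x.val / t, Nat.div_lt_of_lt_mul x.isLt⟩ : Fin t))
      (fun x _ => Finset.mem_univ _) ?_
    · simpa using hinj
    · intro x hx y hy hxy
      simp only [Finset.coe_filter, Set.mem_setOf_eq] at hx hy
      have hx' := hx.2
      have hy' := hy.2
      have hdiv : x.val / t = y.val / t := by
        have h0 := congrArg Fin.val hxy
        simpa using h0
      have ex := Nat.div_add_mod x.val t
      have ey := Nat.div_add_mod y.val t
      rw [hdiv] at ex
      have hx2 : x.val % t = u.val % t := hx'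
      have hy2 : y.val % t = u.val % t := hy'
      exact Fin.ext (by omega)
  obtain ⟨w, hwS, hwc⟩ : ∃ w ∈ S, ¬ (w.val % t = u.val % t) := by
    by_contra h
    push_neg at h
    have hsub : S ⊆ Finset.univ.filter (fun x : Fin (t * t) => x.val % t = u.val % t) :=
      fun x hx => Finset.mem_filter.2 ⟨Finset.mem_univ _, h x hx⟩
    have := Finset.card_le_card hsub
    omega
  -- build the triangle u - v - w - u
  have h1 : (⊤ : SimpleGraph (Fin (t * t))).Adj u v := by simpa using huv
  have h2 : (⊤ : SimpleGraph (Fin (t * t))).Adj v w := by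
    simp only [SimpleGraph.top_adj]
    intro h; exact hwc (by rw [← h]; exact hccv.symm)
  have h3 : (⊤ : SimpleGraph (Fin (t * t))).Adj w u := by
    simp only [SimpleGraph.top_adj]
    intro h; exact hwc (by rw [h])
  set p : (⊤ : SimpleGraph (Fin (t * t))).Walk u u :=
    SimpleGraph.Walk.cons h1 (SimpleGraph.Walk.cons h2 (SimpleGraph.Walk.cons h3 SimpleGraph.Walk.nil)) with hp
  have ne1 : u ≠ v := h1.ne
  have ne2 : v ≠ w := h2.ne
  have ne3 : w ≠ u := h3.ne
  have hcyc : p.IsCycle := by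
    rw [SimpleGraph.Walk.isCycle_def, SimpleGraph.Walk.isTrail_def]
    refine ⟨?_, by simp [hp], ?_⟩
    · simp [hp, Sym2.eq_iff, List.Nodup, ne1, ne2, ne3, Ne.symm ne1, Ne.symm ne2, Ne.symm ne3]
    · simp [hp, List.Nodup, ne1, ne2, ne3, Ne.symm ne1, Ne.symm ne2, Ne.symm ne3]
  have hsupp : ∀ x ∈ p.support, x ∈ {v : Fin (t * t) | v ∈ Set.univ ∧ f v = i} := by
    intro x hx
    simp only [hp, SimpleGraph.Walk.support_cons, SimpleGraph.Walk.support_nil,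
      List.mem_cons, List.not_mem_nil, or_false, List.mem_singleton] at hx
    have hfu : f u = i := (Finset.mem_filter.1 hu).2
    have hfv : f v = i := (Finset.mem_filter.1 hv).2
    have hfw : f w = i := (Finset.mem_filter.1 hwS).2
    rcases hx with rfl | rfl | rfl | rfl <;> exact ⟨Set.mem_univ _, by assumption⟩
  have hval : walkVal γ p = a := by
    simp only [walkVal, hp, SimpleGraph.Walk.edges_cons, SimpleGraph.Walk.edges_nil,
      List.map_cons, List.map_nil, List.sum_cons, List.sum_nil, hγ, Sym2.lift_mk]
    rw [if_pos hccv, if_neg (fun hh => hwc ((hccv.trans hh).symm)), if_neg hwc]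
    abel
  exact hf i u p hcyc hsupp (hval ▸ ha)


end ArbPaper
end

section
/- Let ℓ and m be positive integers, let Γ be an abelian group, and let A ⊆ Γ be a non-empty set. Let (G, γ) be a connected Γ-labelled graph, and suppose there is a sequence S_0 ⊇ S_1 ⊇ ⋯ ⊇ S_m of vertex sets of G such that for every i ∈ [m] and every two distinct vertices x and y in S_m, there is an S_m-path of length at least ℓ in G[S_m ∪ (S_{i−1} \ S_i)] whose endpoints are x and y. Let (T_1, T_2) be a partition of S_m and set L_j := S_{j−1} \ S_j for each j ∈ [m]. Then for every two distinct vertices x and y in T_1, every I ⊆ [m] with |I| = 2, and every vertex z in T_2, there is an (x, y)-path P of length at least 2ℓ such that V(P) ⊆ {x, y, z} ∪ (⋃_{i∈I} L_i). -/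
namespace ArbPaper

universe u v

/-- Appending two paths meeting only in the common endpoint gives a path. -/
lemma isPath_append_aux {V : Type u} {G : SimpleGraph V} {x z y : V}
    {p : G.Walk x z} {q : G.Walk z y} (hp : p.IsPath) (hq : q.IsPath)
    (h : ∀ v, v ∈ p.support → v ∈ q.support → v = z) :
    (p.append q).IsPath := by
  rw [SimpleGraph.Walk.isPath_def, SimpleGraph.Walk.support_append]
  have hqn := hq.support_nodup
  rw [q.support_eq_cons] at hqn
  refine List.Nodup.append hp.support_nodup (List.Nodup.of_cons hqn) ?_
  intro v hv hv2
  have hvz := h v hv (List.mem_of_mem_tail hv2)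
  subst hvz
  exact (List.nodup_cons.mp hqn).1 hv2

theorem statement11 (ℓ m : ℕ) (hℓ : 0 < ℓ) (hm : 0 < m)
    (Γ : Type v) [AddCommGroup Γ] (A : Set Γ) (hA : A.Nonempty)
    (V : Type u) [Fintype V] (G : SimpleGraph V) (γ : Sym2 V → Γ)
    (hG : G.Connected) (S : ℕ → Set V)
    (hmono : ∀ i, 1 ≤ i → i ≤ m → S i ⊆ S (i - 1))
    (hpaths : ∀ i, 1 ≤ i → i ≤ m → ∀ x ∈ S m, ∀ y ∈ S m, x ≠ y →
      ∃ w : G.Walk x y,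
        IsXPathIn G (S m) (S m ∪ (S (i - 1) \ S i)) w ∧ ℓ ≤ w.length)
    (T₁ T₂ : Set V) (hpart : T₁ ∪ T₂ = S m) (hdisj : Disjoint T₁ T₂) :
    ∀ x ∈ T₁, ∀ y ∈ T₁, x ≠ y →
      ∀ I : Finset ℕ, (∀ i ∈ I, 1 ≤ i ∧ i ≤ m) → I.card = 2 →
      ∀ z ∈ T₂,
        ∃ w : G.Walk x y, w.IsPath ∧ 2 * ℓ ≤ w.length ∧
          ∀ v ∈ w.support, v = x ∨ v = y ∨ v = z ∨
            ∃ i ∈ I, v ∈ S (i - 1) \ S i := by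
  intro x hx y hy hxy I hI hcard z hz
  -- monotone chain
  have hchain : ∀ p q : ℕ, p ≤ q → q ≤ m → S q ⊆ S p := by
    intro p q hpq hqm
    induction q, hpq using Nat.le_induction with
    | base => exact subset_rfl
    | succ n hn ih =>
      have h1 : S (n + 1) ⊆ S n := by
        have := hmono (n + 1) (Nat.le_add_left 1 n) hqm
        simpa using this
      exact h1.trans (ih (Nat.le_of_succ_le hqm))
  -- pick i < j in I
  obtain ⟨a, b, hab, hIeq⟩ := Finset.card_eq_two.mp hcard
  obtain ⟨i, j, hij, hiI, hjI⟩ : ∃ i j, i < j ∧ i ∈ I ∧ j ∈ I := by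
    rcases lt_or_gt_of_ne hab with h | h
    · exact ⟨a, b, h, by simp [hIeq], by simp [hIeq]⟩
    · exact ⟨b, a, h, by simp [hIeq], by simp [hIeq]⟩
  obtain ⟨hi1, him⟩ := hI i hiI
  obtain ⟨hj1, hjm⟩ := hI j hjI
  -- memberships in S m
  have hSm : ∀ v, v ∈ T₁ ∪ T₂ → v ∈ S m := fun v hv => hpart ▸ hv
  have hxS : x ∈ S m := hSm x (Or.inl hx)
  have hyS : y ∈ S m := hSm y (Or.inl hy)
  have hzS : z ∈ S m := hSm z (Or.inr hz)
  have hxz : x ≠ z := fun h => Set.disjoint_left.mp hdisj hx (h ▸ hz)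
  have hzy : z ≠ y := fun h => Set.disjoint_left.mp hdisj hy (h ▸ hz)
  -- levels avoid S m
  have hLdisj : ∀ k, 1 ≤ k → k ≤ m → ∀ v ∈ S (k - 1) \ S k, v ∉ S m :=
    fun k hk1 hkm v hv hvm => hv.2 (hchain k m hkm le_rfl hvm)
  -- the two paths
  obtain ⟨w1, ⟨hp1, hl1', _, _, hsub1, hint1⟩, hl1⟩ :=
    hpaths i hi1 him x hxS z hzS hxz
  obtain ⟨w2, ⟨hp2, hl2', _, _, hsub2, hint2⟩, hl2⟩ :=
    hpaths j hj1 hjm z hzS y hyS hzy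
  -- characterize supports
  have hchar1 : ∀ v ∈ w1.support, v = x ∨ v = z ∨ (v ∈ S (i - 1) \ S i ∧ v ∉ S m) := by
    intro v hv
    by_cases hvx : v = x
    · exact Or.inl hvx
    by_cases hvz : v = z
    · exact Or.inr (Or.inl hvz)
    have hvm : v ∉ S m := hint1 v hv hvx hvz
    rcases hsub1 v hv with h | h
    · exact absurd h hvm
    · exact Or.inr (Or.inr ⟨h, hvm⟩)
  have hchar2 : ∀ v ∈ w2.support, v = z ∨ v = y ∨ (v ∈ S (j - 1) \ S j ∧ v ∉ S m) := by
    intro v hv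
    by_cases hvz : v = z
    · exact Or.inl hvz
    by_cases hvy : v = y
    · exact Or.inr (Or.inl hvy)
    have hvm : v ∉ S m := hint2 v hv hvz hvy
    rcases hsub2 v hv with h | h
    · exact absurd h hvm
    · exact Or.inr (Or.inr ⟨h, hvm⟩)
  -- levels i and j are disjoint
  have hLL : ∀ v, v ∈ S (i - 1) \ S i → v ∈ S (j - 1) \ S j → False := by
    intro v hvi hvj
    have : S (j - 1) ⊆ S i := hchain i (j - 1) (by omega) (by omega)
    exact hvi.2 (this hvj.1)
  -- supports only meet at z
  have hmeet : ∀ v, v ∈ w1.support → v ∈ w2.support → v = z := by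
    intro v hv1 hv2
    rcases hchar1 v hv1 with rfl | rfl | ⟨hvi, hvm⟩
    · rcases hchar2 v hv2 with h | h | ⟨_, hvm⟩
      · exact h
      · exact absurd h hxy
      · exact absurd hxS hvm
    · rfl
    · rcases hchar2 v hv2 with h | rfl | ⟨hvj, _⟩
      · exact h
      · exact absurd hyS hvm
      · exact absurd (hLL v hvi hvj) not_false
  refine ⟨w1.append w2, isPath_append_aux hp1 hp2 hmeet, ?_, ?_⟩
  · rw [SimpleGraph.Walk.length_append]; omega
  · intro v hv
    rcases (SimpleGraph.Walk.mem_support_append_iff _ _).mp hv with h | h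
    · rcases hchar1 v h with h | h | ⟨h, _⟩
      · exact Or.inl h
      · exact Or.inr (Or.inr (Or.inl h))
      · exact Or.inr (Or.inr (Or.inr ⟨i, hiI, h⟩))
    · rcases hchar2 v h with h | h | ⟨h, _⟩
      · exact Or.inr (Or.inr (Or.inl h))
      · exact Or.inr (Or.inl h)
      · exact Or.inr (Or.inr (Or.inr ⟨j, hjI, h⟩))

end ArbPaper
end

section
/- Let ℓ and m be positive integers, let Γ be an abelian group, and let A ⊆ Γ be a non-empty set. Let (G, γ) be a connected Γ-labelled graph, and suppose there is a sequence S_0 ⊇ S_1 ⊇ ⋯ ⊇ S_m of vertex sets of G such that for every i ∈ [m] and every two distinct vertices x and y in S_m, there is an S_m-path of length at least ℓ in G[S_m ∪ (S_{i−1} \ S_i)] whose endpoints are x and y. Let (T_1, T_2) be a partition of S_m and set L_j := S_{j−1} \ S_j for each j ∈ [m]. Let Λ be a subgroup of Γ with Λ ∩ A = ∅. Then for every two distinct vertices x and y in T_1, every I ⊆ [m] with |I| = 4, and every cycle C contained in G[T_2] of γ-value in A, there is an (x, y)-path P of γ-value in Γ \ Λ and of length at least 2ℓ such that V(P) ⊆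 {x, y} ∪ V(C) ∪ (⋃_{i∈I} L_i). -/
namespace ArbPaper

universe u v

lemma walkVal_append {V : Type u} {Γ : Type v} [AddCommGroup Γ] {G : SimpleGraph V}
    (γ : Sym2 V → Γ) {x y z : V} (p : G.Walk x y) (q : G.Walk y z) :
    walkVal γ (p.append q) = walkVal γ p + walkVal γ q := by
  simp [walkVal, SimpleGraph.Walk.edges_append]

lemma walkVal_cons {V : Type u} {Γ : Type v} [AddCommGroup Γ] {G : SimpleGraph V}
    (γ : Sym2 V → Γ) {x y z : V} (h : G.Adj x y) (p : G.Walk y z) :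
    walkVal γ (SimpleGraph.Walk.cons h p) = γ s(x, y) + walkVal γ p := by
  simp [walkVal, SimpleGraph.Walk.edges_cons]

lemma isPath_append_helper {V : Type u} {G : SimpleGraph V} {x u y : V}
    {p : G.Walk x u} {q : G.Walk u y} (hp : p.IsPath) (hq : q.IsPath)
    (h : ∀ z ∈ p.support, z ∈ q.support → z = u) : (p.append q).IsPath := by
  have hq' : q.support.Nodup := hq.support_nodup
  have hqc : q.support = u :: q.support.tail := q.support_eq_cons
  have hu_tail : u ∉ q.support.tail := by
    rw [hqc] at hq'; exact (List.nodup_cons.mp hq').1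
  have htail : q.support.tail.Nodup := by
    rw [hqc] at hq'; exact (List.nodup_cons.mp hq').2
  rw [SimpleGraph.Walk.isPath_def, SimpleGraph.Walk.support_append]
  refine List.Nodup.append hp.support_nodup htail ?_
  intro z hz hz'
  have : z = u := h z hz (List.mem_of_mem_tail hz')
  subst this
  exact hu_tail hz'

theorem statement12 (ℓ m : ℕ) (hℓ : 0 < ℓ) (hm : 0 < m)
    (Γ : Type v) [AddCommGroup Γ] (A : Set Γ) (hA : A.Nonempty)
    (V : Type u) [Fintype V] (G : SimpleGraph V) (γ : Sym2 V → Γ)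
    (hG : G.Connected) (S : ℕ → Set V)
    (hmono : ∀ i, 1 ≤ i → i ≤ m → S i ⊆ S (i - 1))
    (hpaths : ∀ i, 1 ≤ i → i ≤ m → ∀ x ∈ S m, ∀ y ∈ S m, x ≠ y →
      ∃ w : G.Walk x y,
        IsXPathIn G (S m) (S m ∪ (S (i - 1) \ S i)) w ∧ ℓ ≤ w.length)
    (T₁ T₂ : Set V) (hpart : T₁ ∪ T₂ = S m) (hdisj : Disjoint T₁ T₂)
    (Λ : AddSubgroup Γ) (hΛ : (Λ : Set Γ) ∩ A = ∅) :
    ∀ x ∈ T₁, ∀ y ∈ T₁, x ≠ y →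
      ∀ I : Finset ℕ, (∀ i ∈ I, 1 ≤ i ∧ i ≤ m) → I.card = 4 →
      ∀ (c : V) (wC : G.Walk c c), wC.IsCycle → (∀ v ∈ wC.support, v ∈ T₂) →
        walkVal γ wC ∈ A →
        ∃ w : G.Walk x y, w.IsPath ∧ walkVal γ w ∉ (Λ : Set Γ) ∧
          2 * ℓ ≤ w.length ∧
          ∀ v ∈ w.support, v = x ∨ v = y ∨ v ∈ wC.support ∨
            ∃ i ∈ I, v ∈ S (i - 1) \ S i := by
  classical
  intro x hx y hy hxy I hI hIcard c wC hcyc hT₂ hCA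
  -- monotonicity of S
  have hSmono : ∀ i j : ℕ, i ≤ j → j ≤ m → S j ⊆ S i := by
    intro i j hij hjm
    induction j with
    | zero => obtain rfl : i = 0 := Nat.le_zero.mp hij; exact subset_rfl
    | succ n ih =>
      rcases Nat.eq_or_lt_of_le hij with rfl | h
      · exact subset_rfl
      · have h1 : S (n + 1) ⊆ S n := by
          have := hmono (n + 1) (by omega) hjm
          simpa using this
        exact h1.trans (ih (by omega) (by omega))
  have hTS : ∀ z, z ∈ T₁ ∨ z ∈ T₂ → z ∈ S m := by
    intro z hz; rw [← hpart]; exact hz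
  have hxS : x ∈ S m := hTS x (Or.inl hx)
  have hyS : y ∈ S m := hTS y (Or.inl hy)
  -- levels are disjoint from S m and pairwise disjoint
  have hLm : ∀ i, 1 ≤ i → i ≤ m → ∀ z ∈ S m, z ∉ S (i - 1) \ S i := by
    intro i h1 h2 z hz hzL
    exact hzL.2 (hSmono i m h2 le_rfl hz)
  have hLL : ∀ i j, 1 ≤ i → i < j → j ≤ m → ∀ z,
      z ∈ S (i - 1) \ S i → z ∉ S (j - 1) \ S j := by
    intro i j h1 hij hjm z hzi hzj
    exact hzi.2 (hSmono i (j - 1) (by omega) (by omega) hzj.1)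
  have hLLne : ∀ i j, 1 ≤ i → 1 ≤ j → i ≤ m → j ≤ m → i ≠ j → ∀ z,
      z ∈ S (i - 1) \ S i → z ∉ S (j - 1) \ S j := by
    intro i j h1 h1' h2 h2' hne z hzi hzj
    rcases Nat.lt_or_ge i j with h | h
    · exact hLL i j h1 h h2' z hzi hzj
    · exact hLL j i h1' (by omega) h2 z hzj hzi
  -- extracting X-paths through a given level
  have getPath : ∀ i, 1 ≤ i → i ≤ m → ∀ s, s ∈ S m → ∀ t, t ∈ S m → s ≠ t →
      ∃ w : G.Walk s t, w.IsPath ∧ ℓ ≤ w.length ∧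
        ∀ z ∈ w.support, z = s ∨ z = t ∨ (z ∈ S (i - 1) \ S i ∧ z ∉ S m) := by
    intro i h1 h2 s hs t ht hst
    obtain ⟨w, ⟨hwp, _, _, _, hwY, hwint⟩, hwl⟩ := hpaths i h1 h2 s hs t ht hst
    refine ⟨w, hwp, hwl, ?_⟩
    intro z hz
    by_cases hzs : z = s
    · exact Or.inl hzs
    by_cases hzt : z = t
    · exact Or.inr (Or.inl hzt)
    have hznot : z ∉ S m := hwint z hz hzs hzt
    rcases hwY z hz with h | h
    · exact absurd h hznot
    · exact Or.inr (Or.inr ⟨h, hznot⟩)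
  -- four distinct indices in I
  have hIne : I.Nonempty := by rw [← Finset.card_pos, hIcard]; omega
  obtain ⟨i₁, hi₁⟩ := hIne
  have hcard3 : (I.erase i₁).card = 3 := by
    rw [Finset.card_erase_of_mem hi₁, hIcard]
  obtain ⟨i₂, i₃, i₄, h23, h24, h34, hIe⟩ := Finset.card_eq_three.mp hcard3
  have hi₂e : i₂ ∈ I.erase i₁ := by rw [hIe]; simp
  have hi₃e : i₃ ∈ I.erase i₁ := by rw [hIe]; simp
  have hi₄e : i₄ ∈ I.erase i₁ := by rw [hIe]; simp
  have hi₂ : i₂ ∈ I := Finset.mem_of_mem_erase hi₂e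
  have hi₃ : i₃ ∈ I := Finset.mem_of_mem_erase hi₃e
  have hi₄ : i₄ ∈ I := Finset.mem_of_mem_erase hi₄e
  have h12 : i₁ ≠ i₂ := fun h => (Finset.mem_erase.mp hi₂e).1 h.symm
  have h13 : i₁ ≠ i₃ := fun h => (Finset.mem_erase.mp hi₃e).1 h.symm
  have h14 : i₁ ≠ i₄ := fun h => (Finset.mem_erase.mp hi₄e).1 h.symm
  obtain ⟨hb₁, hb₁'⟩ := hI i₁ hi₁
  obtain ⟨hb₂, hb₂'⟩ := hI i₂ hi₂
  obtain ⟨hb₃, hb₃'⟩ := hI i₃ hi₃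
  obtain ⟨hb₄, hb₄'⟩ := hI i₄ hi₄
  -- destructure the cycle
  cases wC with
  | nil => exact absurd rfl hcyc.ne_nil
  | @cons _ v₂ _ hadj q =>
    have hcv : c ≠ v₂ := hadj.ne
    have hcT₂ : c ∈ T₂ := hT₂ c (SimpleGraph.Walk.start_mem_support _)
    have hqT₂ : ∀ z ∈ q.support, z ∈ T₂ := by
      intro z hz
      exact hT₂ z (by rw [SimpleGraph.Walk.support_cons]; exact List.mem_cons_of_mem _ hz)
    have hvT₂ : v₂ ∈ T₂ := hqT₂ v₂ (SimpleGraph.Walk.start_mem_support _)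
    have hq_path : q.IsPath := ((SimpleGraph.Walk.cons_isCycle_iff q hadj).mp hcyc).1
    have hxT₂ : x ∉ T₂ := fun h => Set.disjoint_left.mp hdisj hx h
    have hyT₂ : y ∉ T₂ := fun h => Set.disjoint_left.mp hdisj hy h
    have hcS : c ∈ S m := hTS c (Or.inr hcT₂)
    have hvS : v₂ ∈ S m := hTS v₂ (Or.inr hvT₂)
    have hxc : x ≠ c := fun h => hxT₂ (h ▸ hcT₂)
    have hyc : y ≠ c := fun h => hyT₂ (h ▸ hcT₂)
    have hxv : x ≠ v₂ := fun h => hxT₂ (h ▸ hvT₂)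
    have hyv : y ≠ v₂ := fun h => hyT₂ (h ▸ hvT₂)
    -- the four connecting paths
    obtain ⟨a, ha_path, ha_len, ha_supp⟩ :=
      getPath i₁ hb₁ hb₁' x hxS c hcS hxc
    obtain ⟨b, hb_path, hb_len, hb_supp⟩ :=
      getPath i₂ hb₂ hb₂' c hcS y hyS (fun h => hyc h.symm)
    obtain ⟨a', ha'_path, ha'_len, ha'_supp⟩ :=
      getPath i₃ hb₃ hb₃' x hxS v₂ hvS hxv
    obtain ⟨b', hb'_path, hb'_len, hb'_supp⟩ :=
      getPath i₄ hb₄ hb₄' v₂ hvS y hyS (fun h => hyv h.symm)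
    -- the one-edge walk c → v₂
    set e₁ : G.Walk c v₂ := SimpleGraph.Walk.cons hadj SimpleGraph.Walk.nil with he₁
    have he₁_supp : ∀ z ∈ e₁.support, z = c ∨ z = v₂ := by
      intro z hz
      simpa [he₁, SimpleGraph.Walk.support_cons] using hz
    have he₁_path : e₁.IsPath := by
      rw [SimpleGraph.Walk.isPath_def]
      simp [he₁, SimpleGraph.Walk.support_cons, hcv]
    -- helper facts about membership vs S m
    have notSm_of_L : ∀ i z, z ∈ S (i - 1) \ S i ∧ z ∉ S m → z ∉ S m := fun _ _ h => h.2
    -- W1 = a ++ b is a path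
    have hW1 : (a.append b).IsPath := by
      refine isPath_append_helper ha_path hb_path ?_
      intro z hza hzb
      rcases ha_supp z hza with rfl | rfl | hL
      · rcases hb_supp z hzb with h | h | h
        · exact h
        · exact absurd h hxy
        · exact absurd hxS h.2
      · rfl
      · rcases hb_supp z hzb with h | h | h
        · exact h
        · exact absurd hyS (h ▸ hL.2)
        · exact absurd h.1 (hLLne i₁ i₂ hb₁ hb₂ hb₁' hb₂' h12 z hL.1)
    -- W2 = a' ++ b' is a path
    have hW2 : (a'.append b').IsPath := by
      refine isPath_append_helper ha'_path hb'_path ?_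
      intro z hza hzb
      rcases ha'_supp z hza with rfl | rfl | hL
      · rcases hb'_supp z hzb with h | h | h
        · exact h
        · exact absurd h hxy
        · exact absurd hxS h.2
      · rfl
      · rcases hb'_supp z hzb with h | h | h
        · exact h
        · exact absurd hyS (h ▸ hL.2)
        · exact absurd h.1 (hLLne i₃ i₄ hb₃ hb₄ hb₃' hb₄' h34 z hL.1)
    -- inner of W3 : e₁ ++ b' is a path
    have hinner3 : (e₁.append b').IsPath := by
      refine isPath_append_helper he₁_path hb'_path ?_
      intro z hze hzb
      rcases he₁_supp z hze with rfl | rfl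
      · rcases hb'_supp z hzb with h | h | h
        · exact absurd h hcv
        · exact absurd h (fun h' => hyc h'.symm)
        · exact absurd hcS h.2
      · rfl
    -- W3 = a ++ (e₁ ++ b') is a path
    have hW3 : (a.append (e₁.append b')).IsPath := by
      refine isPath_append_helper ha_path hinner3 ?_
      intro z hza hzi
      rw [SimpleGraph.Walk.mem_support_append_iff] at hzi
      rcases ha_supp z hza with rfl | rfl | hL
      · rcases hzi with h | h
        · rcases he₁_supp z h with h' | h'
          · exact h'
          · exact absurd h' hxv
        · rcases hb'_supp z h with h' | h' | h'
          · exact absurd h' hxv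
          · exact absurd h' hxy
          · exact absurd hxS h'.2
      · rfl
      · rcases hzi with h | h
        · rcases he₁_supp z h with h' | h'
          · exact h'
          · exact absurd hvS (h' ▸ hL.2)
        · rcases hb'_supp z h with h' | h' | h'
          · exact absurd hvS (h' ▸ hL.2)
          · exact absurd hyS (h' ▸ hL.2)
          · exact absurd h'.1 (hLLne i₁ i₄ hb₁ hb₄ hb₁' hb₄' h14 z hL.1)
    -- inner of W4 : q ++ b is a path
    have hinner4 : (q.append b).IsPath := by
      refine isPath_append_helper hq_path hb_path ?_
      intro z hzq hzb
      have hzT₂ : z ∈ T₂ := hqT₂ z hzq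
      rcases hb_supp z hzb with h | h | h
      · exact h
      · exact absurd hzT₂ (h ▸ hyT₂)
      · exact absurd (hTS z (Or.inr hzT₂)) h.2
    -- W4 = a' ++ (q ++ b) is a path
    have hW4 : (a'.append (q.append b)).IsPath := by
      refine isPath_append_helper ha'_path hinner4 ?_
      intro z hza hzi
      rw [SimpleGraph.Walk.mem_support_append_iff] at hzi
      rcases ha'_supp z hza with rfl | rfl | hL
      · rcases hzi with h | h
        · exact absurd (hqT₂ z h) hxT₂
        · rcases hb_supp z h with h' | h' | h'
          · exact absurd h' hxc
          · exact absurd h' hxy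
          · exact absurd hxS h'.2
      · rfl
      · rcases hzi with h | h
        · exact absurd (hTS z (Or.inr (hqT₂ z h))) hL.2
        · rcases hb_supp z h with h' | h' | h'
          · exact absurd hcS (h' ▸ hL.2)
          · exact absurd hyS (h' ▸ hL.2)
          · exact absurd h'.1 (hLLne i₃ i₂ hb₃ hb₂ hb₃' hb₂' (fun h => h23 h.symm) z hL.1)
    -- support inclusion facts for the conclusion
    have hc_mem : c ∈ (SimpleGraph.Walk.cons hadj q).support :=
      SimpleGraph.Walk.start_mem_support _
    have hq_mem : ∀ z ∈ q.support, z ∈ (SimpleGraph.Walk.cons hadj q).support := by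
      intro z hz
      rw [SimpleGraph.Walk.support_cons]
      exact List.mem_cons_of_mem _ hz
    have hv_mem : v₂ ∈ (SimpleGraph.Walk.cons hadj q).support :=
      hq_mem v₂ (SimpleGraph.Walk.start_mem_support _)
    have goal_a : ∀ z ∈ a.support, z = x ∨ z = y ∨
        z ∈ (SimpleGraph.Walk.cons hadj q).support ∨ ∃ i ∈ I, z ∈ S (i - 1) \ S i := by
      intro z hz
      rcases ha_supp z hz with rfl | rfl | hL
      · exact Or.inl rfl
      · exact Or.inr (Or.inr (Or.inl hc_mem))
      · exact Or.inr (Or.inr (Or.inr ⟨i₁, hi₁, hL.1⟩))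
    have goal_b : ∀ z ∈ b.support, z = x ∨ z = y ∨
        z ∈ (SimpleGraph.Walk.cons hadj q).support ∨ ∃ i ∈ I, z ∈ S (i - 1) \ S i := by
      intro z hz
      rcases hb_supp z hz with rfl | rfl | hL
      · exact Or.inr (Or.inr (Or.inl hc_mem))
      · exact Or.inr (Or.inl rfl)
      · exact Or.inr (Or.inr (Or.inr ⟨i₂, hi₂, hL.1⟩))
    have goal_a' : ∀ z ∈ a'.support, z = x ∨ z = y ∨
        z ∈ (SimpleGraph.Walk.cons hadj q).support ∨ ∃ i ∈ I, z ∈ S (i - 1) \ S i := by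
      intro z hz
      rcases ha'_supp z hz with rfl | rfl | hL
      · exact Or.inl rfl
      · exact Or.inr (Or.inr (Or.inl hv_mem))
      · exact Or.inr (Or.inr (Or.inr ⟨i₃, hi₃, hL.1⟩))
    have goal_b' : ∀ z ∈ b'.support, z = x ∨ z = y ∨
        z ∈ (SimpleGraph.Walk.cons hadj q).support ∨ ∃ i ∈ I, z ∈ S (i - 1) \ S i := by
      intro z hz
      rcases hb'_supp z hz with rfl | rfl | hL
      · exact Or.inr (Or.inr (Or.inl hv_mem))
      · exact Or.inr (Or.inl rfl)
      · exact Or.inr (Or.inr (Or.inr ⟨i₄, hi₄, hL.1⟩))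
    -- case analysis on the four candidate paths
    by_cases hΛ1 : walkVal γ (a.append b) ∈ (Λ : Set Γ)
    · by_cases hΛ2 : walkVal γ (a'.append b') ∈ (Λ : Set Γ)
      · by_cases hΛ3 : walkVal γ (a.append (e₁.append b')) ∈ (Λ : Set Γ)
        · by_cases hΛ4 : walkVal γ (a'.append (q.append b)) ∈ (Λ : Set Γ)
          · -- all four in Λ : contradiction with γ(C) ∈ A
            exfalso
            have hval : walkVal γ (SimpleGraph.Walk.cons hadj q) =
                walkVal γ (a.append (e₁.append b')) + walkVal γ (a'.append (q.append b))
                  - walkVal γ (a.append b) - walkVal γ (a'.append b') := by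
              rw [walkVal_cons, walkVal_append, walkVal_append, walkVal_append,
                walkVal_append, walkVal_append, walkVal_append, walkVal_cons]
              simp only [walkVal, SimpleGraph.Walk.edges_nil, List.map_nil, List.sum_nil]
              abel
            have hmem : walkVal γ (SimpleGraph.Walk.cons hadj q) ∈ (Λ : Set Γ) := by
              rw [hval]
              exact Λ.sub_mem (Λ.sub_mem (Λ.add_mem hΛ3 hΛ4) hΛ1) hΛ2
            have : walkVal γ (SimpleGraph.Walk.cons hadj q) ∈ (Λ : Set Γ) ∩ A := ⟨hmem, hCA⟩
            rw [hΛ] at this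
            exact this
          · -- use W4
            refine ⟨a'.append (q.append b), hW4, hΛ4, ?_, ?_⟩
            · rw [SimpleGraph.Walk.length_append, SimpleGraph.Walk.length_append]
              omega
            · intro z hz
              rw [SimpleGraph.Walk.mem_support_append_iff,
                SimpleGraph.Walk.mem_support_append_iff] at hz
              rcases hz with h | h | h
              · exact goal_a' z h
              · exact Or.inr (Or.inr (Or.inl (hq_mem z h)))
              · exact goal_b z h
        · -- use W3
          refine ⟨a.append (e₁.append b'), hW3, hΛ3, ?_, ?_⟩
          · rw [SimpleGraph.Walk.length_append, SimpleGraph.Walk.length_append]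
            omega
          · intro z hz
            rw [SimpleGraph.Walk.mem_support_append_iff,
              SimpleGraph.Walk.mem_support_append_iff] at hz
            rcases hz with h | h | h
            · exact goal_a z h
            · rcases he₁_supp z h with rfl | rfl
              · exact Or.inr (Or.inr (Or.inl hc_mem))
              · exact Or.inr (Or.inr (Or.inl hv_mem))
            · exact goal_b' z h
      · -- use W2
        refine ⟨a'.append b', hW2, hΛ2, ?_, ?_⟩
        · rw [SimpleGraph.Walk.length_append]; omega
        · intro z hz
          rw [SimpleGraph.Walk.mem_support_append_iff] at hz
          rcases hz with h | h
          · exact goal_a' z h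
          · exact goal_b' z h
    · -- use W1
      refine ⟨a.append b, hW1, hΛ1, ?_, ?_⟩
      · rw [SimpleGraph.Walk.length_append]; omega
      · intro z hz
        rw [SimpleGraph.Walk.mem_support_append_iff] at hz
        rcases hz with h | h
        · exact goal_a z h
        · exact goal_b z h

end ArbPaper
end
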